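/- arXiv:2006.16433 — 2 statements merged into one kernel-verified Lean document; each statement's English description precedes it below -/
import Mathlib

section
/- The OWL penalty Ω_λ(β) = Σ_{i=1}^d λ_i |β|_{[i]} with λ non-increasing, non-negative, and λ_1 > 0, defines a norm on ℝ^d. -/
open Finset

/-- The OWL penalty: sum over i of lam i * |beta|_[i], where |beta|_[i] is the i-th largest
absolute value among the coordinates of beta (obtained by sorting |beta| and reversing). -/
noncomputable def owl {d : ℕ} (lam : Fin d → ℝ) (β : Fin d → ℝ) : ℝ :=
  ∑ i : Fin d, lam i * |β (Tuple.sort (fun j => |β j|) i.rev)|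

/-- The sorting permutation composed with reversal. -/
noncomputable def owlPerm {d : ℕ} (β : Fin d → ℝ) : Equiv.Perm (Fin d) :=
  Fin.revPerm.trans (Tuple.sort (fun j => |β j|))

lemma owl_eq_perm {d : ℕ} (lam : Fin d → ℝ) (β : Fin d → ℝ) :
    owl lam β = ∑ i : Fin d, lam i * |β (owlPerm β i)| := by
  simp [owl, owlPerm]

lemma key {d : ℕ} (lam : Fin d → ℝ) (hmono : Antitone lam) (β : Fin d → ℝ)
    (π : Equiv.Perm (Fin d)) :
    ∑ i : Fin d, lam i * |β (π i)| ≤ owl lam β := by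
  set f : Fin d → ℝ := fun j => |β j| with hf
  set h : Fin d → ℝ := fun i => f (Tuple.sort f i.rev) with hh
  have hanti : Antitone h := by
    intro i j hij
    exact Tuple.monotone_sort f (Fin.rev_le_rev.mpr hij)
  have hmv : Monovary lam h := hmono.monovary hanti
  set σ : Equiv.Perm (Fin d) :=
    π.trans (((Tuple.sort f).symm).trans Fin.revPerm) with hσ
  have hcomp : ∀ i, h (σ i) = f (π i) := by
    intro i
    simp [hh, hσ, Fin.rev_rev]
  have := hmv.sum_smul_comp_perm_le_sum_smul (σ := σ)
  simp only [smul_eq_mul] at this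
  calc ∑ i : Fin d, lam i * |β (π i)| = ∑ i : Fin d, lam i * h (σ i) := by
        refine Finset.sum_congr rfl fun i _ => ?_
        rw [hcomp i]
      _ ≤ ∑ i : Fin d, lam i * h i := this
      _ = owl lam β := by simp [owl, hh, hf]

theorem owl_is_norm {d : ℕ} (hd : 0 < d) (lam : Fin d → ℝ)
    (hmono : Antitone lam) (hnonneg : ∀ i, 0 ≤ lam i) (hpos : 0 < lam ⟨0, hd⟩) :
    (∀ β : Fin d → ℝ, 0 ≤ owl lam β) ∧
    (∀ β : Fin d → ℝ, owl lam β = 0 ↔ β = 0) ∧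
    (∀ (c : ℝ) (β : Fin d → ℝ), owl lam (c • β) = |c| * owl lam β) ∧
    (∀ β γ : Fin d → ℝ, owl lam (β + γ) ≤ owl lam β + owl lam γ) := by
  have hterm : ∀ (β : Fin d → ℝ) (π : Equiv.Perm (Fin d)) (i : Fin d),
      0 ≤ lam i * |β (π i)| := fun β π i => mul_nonneg (hnonneg i) (abs_nonneg _)
  have h0 : ∀ β : Fin d → ℝ, 0 ≤ owl lam β := by
    intro β
    rw [owl_eq_perm]
    exact Finset.sum_nonneg fun i _ => hterm β _ i
  refine ⟨h0, ?_, ?_, ?_⟩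
  · intro β
    constructor
    · intro hzero
      by_contra hβ
      obtain ⟨j, hj⟩ : ∃ j, β j ≠ 0 := by
        by_contra hc
        push_neg at hc
        exact hβ (funext fun j => hc j)
      have hkey := key lam hmono β (Equiv.swap ⟨0, hd⟩ j)
      have hlb : lam ⟨0, hd⟩ * |β j| ≤ ∑ i : Fin d, lam i * |β (Equiv.swap ⟨0, hd⟩ j i)| := by
        have := Finset.single_le_sum (f := fun i => lam i * |β (Equiv.swap ⟨0, hd⟩ j i)|)
          (fun i _ => hterm β _ i) (Finset.mem_univ ⟨0, hd⟩)
        simpa using this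
      have hposval : 0 < lam ⟨0, hd⟩ * |β j| :=
        mul_pos hpos (abs_pos.mpr hj)
      linarith [hlb.trans hkey]
    · intro hβ
      subst hβ
      simp [owl]
  · intro c β
    rcases eq_or_ne c 0 with hc | hc
    · subst hc
      simp [owl]
    · apply le_antisymm
      · rw [owl_eq_perm]
        have : ∑ i : Fin d, lam i * |(c • β) (owlPerm (c • β) i)|
            = |c| * ∑ i : Fin d, lam i * |β (owlPerm (c • β) i)| := by
          rw [Finset.mul_sum]
          refine Finset.sum_congr rfl fun i _ => ?_
          simp [abs_mul]; ring
        rw [this]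
        exact mul_le_mul_of_nonneg_left (key lam hmono β _) (abs_nonneg c)
      · rw [owl_eq_perm lam β, Finset.mul_sum]
        have : ∀ i : Fin d, |c| * (lam i * |β (owlPerm β i)|)
            = lam i * |(c • β) (owlPerm β i)| := by
          intro i; simp [abs_mul]; ring
        rw [Finset.sum_congr rfl fun i _ => this i]
        exact key lam hmono (c • β) (owlPerm β)
  · intro β γ
    rw [owl_eq_perm lam (β + γ)]
    calc ∑ i : Fin d, lam i * |(β + γ) (owlPerm (β + γ) i)|
        ≤ ∑ i : Fin d, (lam i * |β (owlPerm (β + γ) i)| + lam i * |γ (owlPerm (β + γ) i)|) := by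
          refine Finset.sum_le_sum fun i _ => ?_
          rw [← mul_add]
          exact mul_le_mul_of_nonneg_left (abs_add_le _ _) (hnonneg i)
      _ = (∑ i : Fin d, lam i * |β (owlPerm (β + γ) i)|)
            + ∑ i : Fin d, lam i * |γ (owlPerm (β + γ) i)| := Finset.sum_add_distrib
      _ ≤ owl lam β + owl lam γ :=
          add_le_add (key lam hmono β _) (key lam hmono γ _)
end

section
/- Safe screening test: let β* minimize the OWL primal with λ non-increasing non-negative, let θ* = Xβ* - y, and let θ ∈ ℝⁿ, β ∈ ℝ^d satisfy ‖θ - θ*‖ ≤ sqrt(2G(β,θ)) for the duality gap G(β,θ) ≥ 0. If |x_iᵀθ| + ‖x_i‖·sqrt(2G(β,θ)) < λ_d, then |x_iᵀθ*| < λ_d ≤ λ_{r(β*_i)}, and hence β*_i = 0. -/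
open Finset

/-- Euclidean dot product on Fin n → ℝ. -/
def dotp {n : ℕ} (u v : Fin n → ℝ) : ℝ := ∑ i : Fin n, u i * v i

/-- Euclidean norm on Fin n → ℝ. -/
noncomputable def enorm2 {n : ℕ} (v : Fin n → ℝ) : ℝ := Real.sqrt (∑ i : Fin n, (v i) ^ 2)

/-! If `β*ᵢ ≠ 0`, shrinking it to `(1 - τ) β*ᵢ` lowers the OWL penalty by at least `τ λ_d |β*ᵢ|`
(rearrangement inequality) and changes the loss by `-τ β*ᵢ xᵢᵀθ* + O(τ²)`; optimality as `τ → 0`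
forces `λ_d ≤ |xᵢᵀθ*|`. The screening test and Cauchy–Schwarz give `|xᵢᵀθ*| < λ_d`. -/

open Filter Topology Matrix

section Euclidean

variable {n : ℕ}

lemma enorm2_eq_norm (v : Fin n → ℝ) : enorm2 v = ‖WithLp.toLp 2 v‖ := by
  simp [enorm2, EuclideanSpace.norm_eq]

lemma dotp_eq_inner (u v : Fin n → ℝ) :
    dotp u v = inner ℝ (WithLp.toLp 2 u) (WithLp.toLp 2 v) := by
  simp [dotp, PiLp.inner_apply, mul_comm]

lemma abs_dotp_le_abs_dotp_add (u v w : Fin n → ℝ) :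
    |dotp u w| ≤ |dotp u v| + enorm2 u * enorm2 (v - w) := by
  have hsplit : dotp u w = dotp u v - dotp u (v - w) := by
    simp only [dotp_eq_inner, WithLp.toLp_sub, inner_sub_right]; ring
  rw [hsplit]
  refine (abs_sub _ _).trans ?_
  gcongr
  simpa only [dotp_eq_inner, enorm2_eq_norm] using abs_real_inner_le_norm _ _

lemma enorm2_neg_add_smul_sq (θ x : Fin n → ℝ) (s : ℝ) :
    enorm2 (-θ + s • x) ^ 2 = enorm2 θ ^ 2 - 2 * s * dotp x θ + s ^ 2 * enorm2 x ^ 2 := by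
  simp only [enorm2_eq_norm, dotp_eq_inner, WithLp.toLp_add, WithLp.toLp_neg, WithLp.toLp_smul,
    norm_add_sq_real, norm_neg, norm_smul, inner_neg_left, inner_smul_right, real_inner_comm,
    Real.norm_eq_abs, mul_pow, sq_abs]
  ring

end Euclidean

lemma Matrix.mulVec_update {m n R : Type*} [Fintype n] [DecidableEq n] [CommRing R]
    (X : Matrix m n R) (β : n → R) (i : n) (b : R) :
    X *ᵥ Function.update β i b = X *ᵥ β + (b - β i) • fun k => X k i := by
  rw [Pi.update_eq_sub_add_single, Matrix.mulVec_add, Matrix.mulVec_sub, Matrix.mulVec_single,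
    Matrix.mulVec_single]
  ext k
  simp only [op_smul_eq_smul, Pi.add_apply, Pi.sub_apply, Pi.smul_apply, col_apply, smul_eq_mul]
  ring

section OWL

variable {d : ℕ} {lam : Fin d → ℝ}

lemma sum_mul_abs_comp_perm_le_owl (hmono : Antitone lam) (β : Fin d → ℝ)
    (e : Equiv.Perm (Fin d)) : ∑ k, lam k * |β (e k)| ≤ owl lam β := by
  set σ := Tuple.sort fun j => |β j|
  have hsorted : Antitone fun k : Fin d => |β (σ k.rev)| := fun a b hab =>
    Tuple.monotone_sort (fun j => |β j|) (Fin.rev_le_rev.mpr hab)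
  have hpair : ∀ k, |β (e k)| = |β (σ (e.trans (σ.symm.trans Fin.revPerm) k).rev)| := by
    simp [Fin.revPerm]
  simp_rw [hpair]
  exact (hmono.monovary hsorted).sum_mul_comp_perm_le_sum_mul

lemma sum_mul_abs_update_comp_perm (w β : Fin d → ℝ) (e : Equiv.Perm (Fin d)) (i : Fin d) (b : ℝ) :
    ∑ k, w k * |Function.update β i b (e k)| =
      ∑ k, w k * |β (e k)| + w (e.symm i) * (|b| - |β i|) := by
  simp only [← e.symm.sum_comp fun j => w j * |Function.update β i b (e j)|,
    ← e.symm.sum_comp fun j => w j * |β (e j)|, Equiv.apply_symm_apply]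
  rw [← sub_eq_iff_eq_add', ← Finset.sum_sub_distrib, Finset.sum_eq_single i]
  · simp only [Function.update_self]; ring
  · intro j _ hj; simp [hj]
  · simp

lemma owl_update_add_le (hmono : Antitone lam) {c : ℝ} (hc : ∀ j, c ≤ lam j)
    (β : Fin d → ℝ) (i : Fin d) {b : ℝ} (hb : |b| ≤ |β i|) :
    owl lam (Function.update β i b) + c * (|β i| - |b|) ≤ owl lam β := by
  set e := Fin.revPerm.trans (Tuple.sort fun j => |Function.update β i b j|)
  have hown : owl lam (Function.update β i b) = ∑ k, lam k * |Function.update β i b (e k)| := rfl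
  rw [hown, sum_mul_abs_update_comp_perm]
  have := sum_mul_abs_comp_perm_le_owl hmono β e
  have := mul_le_mul_of_nonneg_right (hc (e.symm i)) (sub_nonneg.mpr hb)
  linarith

end OWL

lemma le_of_forall_le_add_mul {a b K : ℝ} (h : ∀ τ ∈ Set.Ioc (0 : ℝ) 1, a ≤ b + τ * K) : a ≤ b := by
  have hlim : Tendsto (fun τ : ℝ => b + τ * K) (𝓝[>] 0) (𝓝 b) := by
    have hcont : Continuous fun τ : ℝ => b + τ * K := by fun_prop
    exact (hcont.tendsto' 0 b (by simp)).mono_left nhdsWithin_le_nhds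
  exact ge_of_tendsto hlim (Filter.mem_of_superset (Ioc_mem_nhdsGT zero_lt_one) h)

noncomputable def owlPrimal {n d : ℕ} (X : Matrix (Fin n) (Fin d) ℝ) (y : Fin n → ℝ)
    (lam : Fin d → ℝ) (β : Fin d → ℝ) : ℝ :=
  (1 / 2) * enorm2 (y - X *ᵥ β) ^ 2 + owl lam β

theorem le_abs_dotp_residual_of_ne_zero {n d : ℕ} {X : Matrix (Fin n) (Fin d) ℝ}
    {y : Fin n → ℝ} {lam : Fin d → ℝ} (hmono : Antitone lam) {c : ℝ} (hc : ∀ j, c ≤ lam j)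
    {βs : Fin d → ℝ} (hmin : ∀ β, owlPrimal X y lam βs ≤ owlPrimal X y lam β) {i : Fin d}
    (hi : βs i ≠ 0) : c ≤ |dotp (fun k => X k i) (X *ᵥ βs - y)| := by
  set θs := X *ᵥ βs - y
  set x : Fin n → ℝ := fun k => X k i
  set D := dotp x θs
  have hshrink : ∀ τ ∈ Set.Ioc (0 : ℝ) 1,
      c * |βs i| ≤ |βs i| * |D| + τ * (βs i ^ 2 * enorm2 x ^ 2 / 2) := by
    rintro τ ⟨hτ0, hτ1⟩
    have hb : |(1 - τ) * βs i| = (1 - τ) * |βs i| := by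
      rw [abs_mul, abs_of_nonneg (by linarith : 0 ≤ 1 - τ)]
    have hpen := owl_update_add_le hmono hc βs i (b := (1 - τ) * βs i)
      (by rw [hb]; nlinarith [abs_nonneg (βs i)])
    rw [hb] at hpen
    have hres : y - X *ᵥ Function.update βs i ((1 - τ) * βs i) = -θs + (τ * βs i) • x := by
      rw [Matrix.mulVec_update]
      ext
      simp only [Pi.sub_apply, Pi.add_apply, Pi.smul_apply, smul_eq_mul, neg_sub, θs, x]
      ring
    have hres₀ : y - X *ᵥ βs = -θs + (0 : ℝ) • x := by simp [θs]
    have hopt := hmin (Function.update βs i ((1 - τ) * βs i))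
    rw [owlPrimal, owlPrimal, hres, hres₀, enorm2_neg_add_smul_sq,
      enorm2_neg_add_smul_sq] at hopt
    have hD : -(βs i * D) ≤ |βs i| * |D| := abs_mul (βs i) D ▸ neg_le_abs _
    refine le_of_mul_le_mul_left ?_ hτ0
    nlinarith
  have hlim := le_of_forall_le_add_mul hshrink
  exact le_of_mul_le_mul_left (by rwa [mul_comm] at hlim) (abs_pos.2 hi)

theorem owl_safe_screening_general {n d : ℕ} (hd : 0 < d)
    (X : Matrix (Fin n) (Fin d) ℝ) (y : Fin n → ℝ)
    (lam : Fin d → ℝ) (hmono : Antitone lam)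
    (βs : Fin d → ℝ)
    (hmin : ∀ β : Fin d → ℝ,
      (1 / 2) * (enorm2 (y - X.mulVec βs)) ^ 2 + owl lam βs ≤
      (1 / 2) * (enorm2 (y - X.mulVec β)) ^ 2 + owl lam β)
    (θs : Fin n → ℝ) (hθs : θs = X.mulVec βs - y)
    (θ : Fin n → ℝ) (β : Fin d → ℝ) (G : ℝ)
    (hdist : enorm2 (θ - θs) ≤ Real.sqrt (2 * G))
    (i : Fin d)
    (htest : |dotp (fun k => X k i) θ| + enorm2 (fun k => X k i) * Real.sqrt (2 * G) <
      lam ⟨d - 1, Nat.sub_lt hd one_pos⟩) :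
    |dotp (fun k => X k i) θs| < lam ⟨d - 1, Nat.sub_lt hd one_pos⟩ ∧
      lam ⟨d - 1, Nat.sub_lt hd one_pos⟩ ≤ lam (((Tuple.sort (fun j => |βs j|)).symm i).rev) ∧
      βs i = 0 := by
  have hlast : ∀ j : Fin d, lam ⟨d - 1, Nat.sub_lt hd one_pos⟩ ≤ lam j := fun j =>
    hmono (Fin.mk_le_mk.mpr (Nat.le_sub_one_of_lt j.isLt))
  have hscreen : |dotp (fun k => X k i) θs| < lam ⟨d - 1, Nat.sub_lt hd one_pos⟩ :=
    calc |dotp (fun k => X k i) θs|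
        ≤ |dotp (fun k => X k i) θ| + enorm2 (fun k => X k i) * enorm2 (θ - θs) :=
          abs_dotp_le_abs_dotp_add _ _ _
      _ ≤ |dotp (fun k => X k i) θ| + enorm2 (fun k => X k i) * Real.sqrt (2 * G) := by
          gcongr
          exact Real.sqrt_nonneg _
      _ < _ := htest
  refine ⟨hscreen, hlast _, ?_⟩
  by_contra hi
  subst hθs
  exact hscreen.not_ge (le_abs_dotp_residual_of_ne_zero hmono hlast hmin hi)

/-- Safe screening test for OWL regression. -/
theorem owl_safe_screening {n d : ℕ} (hd : 0 < d)
    (X : Matrix (Fin n) (Fin d) ℝ) (y : Fin n → ℝ)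
    (lam : Fin d → ℝ) (hmono : Antitone lam) (hnonneg : ∀ i, 0 ≤ lam i)
    (βs : Fin d → ℝ)
    (hmin : ∀ β : Fin d → ℝ,
      (1 / 2) * (enorm2 (y - X.mulVec βs)) ^ 2 + owl lam βs ≤
      (1 / 2) * (enorm2 (y - X.mulVec β)) ^ 2 + owl lam β)
    (θs : Fin n → ℝ) (hθs : θs = X.mulVec βs - y)
    (θ : Fin n → ℝ) (β : Fin d → ℝ) (G : ℝ) (hG : 0 ≤ G)
    (hdist : enorm2 (θ - θs) ≤ Real.sqrt (2 * G))
    (i : Fin d)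
    (htest : |dotp (fun k => X k i) θ| + enorm2 (fun k => X k i) * Real.sqrt (2 * G) <
      lam ⟨d - 1, Nat.sub_lt hd one_pos⟩) :
    |dotp (fun k => X k i) θs| < lam ⟨d - 1, Nat.sub_lt hd one_pos⟩ ∧
      lam ⟨d - 1, Nat.sub_lt hd one_pos⟩ ≤ lam (((Tuple.sort (fun j => |βs j|)).symm i).rev) ∧
      βs i = 0 :=
  owl_safe_screening_general hd X y lam hmono βs hmin θs hθs θ β G hdist i htest
end
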